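/- For every λ > 0 and every z ∈ ℂ, the matrix φ_λ(X(0,z)) lies in 𝔤⁻¹, and the (1,0)-entry of φ_λ(J_λ(X(0,z))) equals i times the (1,0)-entry of φ_λ(X(0,z)); that is, the induced isomorphism H_e → 𝔤⁻¹/𝔭 intertwines the complex structure J_λ on H_e with multiplication by i. -/
import Mathlib


open Matrix Complex

noncomputable section

/-- The 3×3 matrix J with J₀₂ = J₁₁ = J₂₀ = 1 and all other entries 0. -/
def Jm : Matrix (Fin 3) (Fin 3) ℂ := !![0,0,1;0,1,0;1,0,0]

/-- The real Lie algebra 𝔤 = su(2,1) = {A : Aᴴ·J + J·A = 0, tr A = 0}. -/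
def su21 : Set (Matrix (Fin 3) (Fin 3) ℂ) :=
  {A | Aᴴ * Jm + Jm * A = 0 ∧ A.trace = 0}

/-- The real Lie algebra 𝔨 = su(2). -/
def su2 : Set (Matrix (Fin 2) (Fin 2) ℂ) :=
  {X | Xᴴ = -X ∧ X.trace = 0}

/-- The element X(t,z) of su(2), with rows (i·t, -conj z) and (z, -i·t). -/
def Xk (t : ℝ) (z : ℂ) : Matrix (Fin 2) (Fin 2) ℂ :=
  !![Complex.I * t, -(starRingEnd ℂ) z; z, -(Complex.I * t)]

/-- The complex structure J_λ on H_e in terms of z = u+iv: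
J_λ(X(0,u+iv)) = X(0, -(1/λ)·v + i·λ·u), so `Jl l z` is the new complex parameter. -/
def Jl (l : ℝ) (z : ℂ) : ℂ := ((-(z.im) / l : ℝ) : ℂ) + Complex.I * ((l * z.re : ℝ) : ℂ)

/-- The matrix φ_λ(X(t,u+iv)) from Theorem 3.3 of the paper. -/
def phiE (l t u v : ℝ) : Matrix (Fin 3) (Fin 3) ℂ :=
  !![(((1+l^2)/(4*l) : ℝ) : ℂ) * (Complex.I * t),
     -((((5-3*l^2)/(4*Real.sqrt l)) : ℝ) : ℂ) * u
       - ((((3-5*l^2)/(4*l*Real.sqrt l)) : ℝ) : ℂ) * (Complex.I * v),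
     ((((-15+34*l^2-15*l^4)/(16*l^2)) : ℝ) : ℂ) * (Complex.I * t);
     ((Real.sqrt l : ℝ) : ℂ) * u + (((1/Real.sqrt l) : ℝ) : ℂ) * (Complex.I * v),
     -((((1+l^2)/(2*l)) : ℝ) : ℂ) * (Complex.I * t),
     ((((5-3*l^2)/(4*Real.sqrt l)) : ℝ) : ℂ) * u
       - ((((3-5*l^2)/(4*l*Real.sqrt l)) : ℝ) : ℂ) * (Complex.I * v);
     Complex.I * t,
     -((Real.sqrt l : ℝ) : ℂ) * u + (((1/Real.sqrt l) : ℝ) : ℂ) * (Complex.I * v),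
     (((1+l^2)/(4*l) : ℝ) : ℂ) * (Complex.I * t)]

/-- The ℝ-linear map φ_λ, written as a map on 2×2 matrices: for X ∈ su(2) we have
X = X(t,z) with t = (X₀₀).im and z = X₁₀, and φ_λ(X(t,u+iv)) = `phiE l t u v`. -/
def phiMap (l : ℝ) (X : Matrix (Fin 2) (Fin 2) ℂ) : Matrix (Fin 3) (Fin 3) ℂ :=
  phiE l (X 0 0).im (X 1 0).re (X 1 0).im

/-- 𝔭 = {A ∈ 𝔤 : A₁₀ = A₂₀ = A₂₁ = 0}. -/
def pSub : Set (Matrix (Fin 3) (Fin 3) ℂ) :=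
  {A ∈ su21 | A 1 0 = 0 ∧ A 2 0 = 0 ∧ A 2 1 = 0}

/-- 𝔤⁻¹ = {A ∈ 𝔤 : A₂₀ = 0}. -/
def film1 : Set (Matrix (Fin 3) (Fin 3) ℂ) := {A ∈ su21 | A 2 0 = 0}

/-- φ_λ maps H_e into 𝔤⁻¹ and intertwines J_λ with multiplication by i
on the (1,0)-entries (i.e. on 𝔤⁻¹/𝔭 ≅ ℂ). -/
theorem stmt7 (l : ℝ) (hl : 0 < l) (z : ℂ) :
    phiMap l (Xk 0 z) ∈ film1 ∧
    (phiMap l (Xk 0 (Jl l z))) 1 0 = Complex.I * (phiMap l (Xk 0 z)) 1 0 := by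
  obtain ⟨s, hs0, rfl⟩ : ∃ s : ℝ, 0 < s ∧ s * s = l :=
    ⟨Real.sqrt l, Real.sqrt_pos.mpr hl, Real.mul_self_sqrt hl.le⟩
  have hss : Real.sqrt (s * s) = s := Real.sqrt_mul_self hs0.le
  have hs' : s ≠ 0 := ne_of_gt hs0
  refine ⟨⟨⟨?_, ?_⟩, ?_⟩, ?_⟩
  · ext i j
    fin_cases i <;> fin_cases j <;>
      simp [phiMap, phiE, Jm, Xk, Matrix.mul_apply, Fin.sum_univ_three,
        Matrix.conjTranspose_apply, hss, Matrix.vecHead, Matrix.vecTail, map_ofNat,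
        Complex.ext_iff]
  · simp [phiMap, phiE, Xk, Matrix.trace, Fin.sum_univ_three, Matrix.diag]
  · simp [phiMap, phiE, Xk]
  · simp [phiMap, phiE, Xk, Jl, hss, Matrix.vecHead, Matrix.vecTail, Complex.ext_iff]
    constructor <;> norm_cast <;> field_simp <;> ring
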